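/- arXiv:2306.12698 — 2 statements merged into one kernel-verified Lean document; each statement's English description precedes it below -/
import Mathlib

section
/- Let h ∈ ℝ^N, K' ≥ 1, and let T_1, T_2, … be pairwise disjoint subsets of [N] such that |T_i| = K' whenever T_{i+1} is nonempty, and such that for every i ≥ 1 and every j ∈ T_{i+1} one has |h_j| ≤ min_{l ∈ T_i} |h_l|. Then Σ_{i ≥ 2} ‖h_{T_i}‖₂ ≤ (1/√K') Σ_{i ≥ 1} ‖h_{T_i}‖₁; in particular, when the sets T_i (i ≥ 1) partition the complement of a set T_0, this bound equals ‖h_{T_0^c}‖₁ / √K'. -/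
open Finset

/-- The `ℓ1` norm on `Fin n → ℝ`. -/
noncomputable def l1norm {n : ℕ} (x : Fin n → ℝ) : ℝ := ∑ i, |x i|

/-- The `ℓ2` norm on `Fin n → ℝ`. -/
noncomputable def l2norm {n : ℕ} (x : Fin n → ℝ) : ℝ := Real.sqrt (∑ i, x i ^ 2)

/-- The restriction of `x` to the index set `S` (zero outside `S`). -/
def restr {n : ℕ} (x : Fin n → ℝ) (S : Finset (Fin n)) : Fin n → ℝ :=
  fun i => if i ∈ S then x i else 0

/- Every entry on `T_{i+2}` is at most the average `a/K'` of the absolute entries on `T_{i+1}`,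
where `a = ‖h_{T_{i+1}}‖₁`; with `b = ‖h_{T_{i+2}}‖₁` this gives `K' ‖h_{T_{i+2}}‖₂² ≤ a b`, so
`√K' ‖h_{T_{i+2}}‖₂ ≤ √(ab) ≤ (a + b)/2`. Going through `√(ab)` instead of the usual
`‖h_{T_{i+2}}‖₂ ≤ √|T_{i+2}| · a/K'` avoids needing `|T_{i+2}| ≤ K'`, which fails for the last block.
Summing over `i`, each `ℓ1` block norm occurs at most twice with weight `1/2`. Only finitely many of
the disjoint blocks are nonempty, so all sums are finite sums. -/

lemma l1norm_restr {n : ℕ} (x : Fin n → ℝ) (S : Finset (Fin n)) :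
    l1norm (restr x S) = ∑ j ∈ S, |x j| := by
  simp [l1norm, restr, apply_ite abs, Finset.sum_ite_mem]

lemma l2norm_restr {n : ℕ} (x : Fin n → ℝ) (S : Finset (Fin n)) :
    l2norm (restr x S) = Real.sqrt (∑ j ∈ S, x j ^ 2) := by
  simp [l2norm, restr, apply_ite (· ^ 2), Finset.sum_ite_mem]

lemma Real.sqrt_mul_le_add_div_two {a b : ℝ} (ha : 0 ≤ a) (hb : 0 ≤ b) :
    Real.sqrt (a * b) ≤ (a + b) / 2 :=
  Real.sqrt_le_iff.mpr ⟨by positivity, by nlinarith [sq_nonneg (a - b)]⟩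

lemma sqrt_card_mul_l2norm_restr_le {n : ℕ} (h : Fin n → ℝ) {A B : Finset (Fin n)}
    (hAB : ∀ j ∈ B, ∀ l ∈ A, |h j| ≤ |h l|) :
    Real.sqrt A.card * l2norm (restr h B)
      ≤ (l1norm (restr h A) + l1norm (restr h B)) / 2 := by
  rw [l1norm_restr, l1norm_restr, l2norm_restr, ← Real.sqrt_mul (Nat.cast_nonneg _)]
  set a := ∑ l ∈ A, |h l|
  set b := ∑ j ∈ B, |h j|
  have hdom : ∀ j ∈ B, (A.card : ℝ) * |h j| ≤ a := fun j hj => by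
    simpa using Finset.card_nsmul_le_sum A (fun l => |h l|) |h j| (hAB j hj)
  have hsq : (A.card : ℝ) * ∑ j ∈ B, h j ^ 2 ≤ a * b := by
    rw [Finset.mul_sum, Finset.mul_sum]
    refine Finset.sum_le_sum fun j hj => ?_
    rw [← sq_abs, sq, ← mul_assoc]
    exact mul_le_mul_of_nonneg_right (hdom j hj) (abs_nonneg _)
  calc Real.sqrt (A.card * ∑ j ∈ B, h j ^ 2) ≤ Real.sqrt (a * b) := Real.sqrt_le_sqrt hsq
    _ ≤ (a + b) / 2 := Real.sqrt_mul_le_add_div_two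
        (Finset.sum_nonneg fun _ _ => abs_nonneg _) (Finset.sum_nonneg fun _ _ => abs_nonneg _)

lemma tsum_le_tsum_of_le_average_succ {f g : ℕ → ℝ} (hf : ∀ i, 0 ≤ f i) (hg : ∀ i, 0 ≤ g i)
    (hgs : Summable g) (hfg : ∀ i, f i ≤ (g i + g (i + 1)) / 2) :
    ∑' i, f i ≤ ∑' i, g i := by
  have hsucc : Summable (fun i => g (i + 1)) := (summable_nat_add_iff 1).mpr hgs
  have havg : Summable (fun i => (g i + g (i + 1)) / 2) := (hgs.add hsucc).div_const 2
  have hshift : ∑' i, g (i + 1) ≤ ∑' i, g i := by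
    rw [hgs.tsum_eq_zero_add]
    linarith [hg 0]
  calc ∑' i, f i ≤ ∑' i, (g i + g (i + 1)) / 2 :=
        (Summable.of_nonneg_of_le hf hfg havg).tsum_le_tsum hfg havg
    _ = (∑' i, g i + ∑' i, g (i + 1)) / 2 := by rw [tsum_div_const, hgs.tsum_add hsucc]
    _ ≤ ∑' i, g i := by linarith

section DisjointBlocks

variable {ι α : Type*} {S : ι → Finset α}

lemma finite_setOf_nonempty_of_pairwise_disjoint (hS : Pairwise fun i j => Disjoint (S i) (S j))
    (U : Finset α) (hSU : ∀ i, S i ⊆ U) : {i | (S i).Nonempty}.Finite := by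
  have hunion : (⋃ i, (S i : Set α)).Finite :=
    U.finite_toSet.subset (Set.iUnion_subset fun i => Finset.coe_subset.mpr (hSU i))
  simpa using ((Set.finite_iUnion_iff fun i j hij =>
    Finset.disjoint_coe.mpr (hS hij)).mp hunion).2

lemma hasSum_sum_of_pairwise_disjoint {M : Type*} [AddCommMonoid M] [TopologicalSpace M]
    (hS : Pairwise fun i j => Disjoint (S i) (S j)) {U : Finset α} (hU : ∀ j, j ∈ U ↔ ∃ i, j ∈ S i)
    (f : α → M) : HasSum (fun i => ∑ j ∈ S i, f j) (∑ j ∈ U, f j) := by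
  classical
  have hSU : ∀ i, S i ⊆ U := fun i j hj => (hU j).mpr ⟨i, hj⟩
  set F := (finite_setOf_nonempty_of_pairwise_disjoint hS U hSU).toFinset
  have hcover : F.biUnion S = U := by
    ext j
    simp only [Finset.mem_biUnion, F, Set.Finite.mem_toFinset, Set.mem_ofPred_eq, hU]
    exact ⟨fun ⟨i, _, hj⟩ => ⟨i, hj⟩, fun ⟨i, hj⟩ => ⟨i, ⟨j, hj⟩, hj⟩⟩
  rw [← hcover, Finset.sum_biUnion fun i _ k _ hik => hS hik]
  refine hasSum_sum_of_ne_finset_zero fun i hi => ?_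
  simp only [F, Set.Finite.mem_toFinset, Set.mem_ofPred_eq,
    Finset.not_nonempty_iff_eq_empty] at hi
  simp [hi]

lemma summable_sum_of_pairwise_disjoint {M : Type*} [Fintype α] [AddCommMonoid M]
    [TopologicalSpace M] (hS : Pairwise fun i j => Disjoint (S i) (S j)) (f : α → M) :
    Summable (fun i => ∑ j ∈ S i, f j) := by
  classical
  exact (hasSum_sum_of_pairwise_disjoint hS (U := univ.filter fun j => ∃ i, j ∈ S i)
    (by simp) f).summable

end DisjointBlocks

/-- **Block decomposition bound.** If `T_1, T_2, …` are pairwise disjoint subsets of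
`[N]`, each of cardinality `K'` whenever the next one is nonempty, and every entry
of `h` on `T_{i+1}` is dominated in magnitude by every entry on `T_i`, then
`Σ_{i≥2} ‖h_{T_i}‖₂ ≤ (1/√K') Σ_{i≥1} ‖h_{T_i}‖₁`; when the `T_i` (`i ≥ 1`)
partition the complement of `T₀`, the right-hand sum equals `‖h_{T₀ᶜ}‖₁`. -/
theorem block_tail_l2_bound
    {N : ℕ} (h : Fin N → ℝ) (K' : ℕ) (hK' : 1 ≤ K')
    (T : ℕ → Finset (Fin N))
    (hdisj : ∀ i j, 1 ≤ i → 1 ≤ j → i ≠ j → Disjoint (T i) (T j))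
    (hcard : ∀ i, 1 ≤ i → (T (i + 1)).Nonempty → (T i).card = K')
    (hmag : ∀ i, 1 ≤ i → ∀ j ∈ T (i + 1), ∀ l ∈ T i, |h j| ≤ |h l|)
    (T₀ : Finset (Fin N)) :
    (∑' i : ℕ, l2norm (restr h (T (i + 2))))
      ≤ (1 / Real.sqrt (K' : ℝ)) * ∑' i : ℕ, l1norm (restr h (T (i + 1)))
    ∧ ((∀ j : Fin N, j ∉ T₀ ↔ ∃ i, 1 ≤ i ∧ j ∈ T i) →
        (∑' i : ℕ, l1norm (restr h (T (i + 1)))) = l1norm (restr h T₀ᶜ)) := by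
  have hS : Pairwise fun i j => Disjoint (T (i + 1)) (T (j + 1)) := fun i j hij =>
    hdisj _ _ (by omega) (by omega) (by omega)
  have hsK : 0 < Real.sqrt K' := Real.sqrt_pos.mpr (by exact_mod_cast hK')
  have hblock : ∀ i, Real.sqrt K' * l2norm (restr h (T (i + 2)))
      ≤ (l1norm (restr h (T (i + 1))) + l1norm (restr h (T (i + 2)))) / 2 := fun i => by
    rcases (T (i + 2)).eq_empty_or_nonempty with hempty | hne
    · simp only [hempty, l2norm_restr, l1norm_restr, Finset.sum_empty, Real.sqrt_zero, mul_zero]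
      positivity
    · rw [← hcard (i + 1) (by omega) hne]
      exact sqrt_card_mul_l2norm_restr_le h (hmag (i + 1) (by omega))
  refine ⟨?_, fun hpart => ?_⟩
  · have hsum := tsum_le_tsum_of_le_average_succ
      (fun i => mul_nonneg hsK.le (Real.sqrt_nonneg _))
      (fun i => by rw [l1norm_restr]; positivity)
      (by simpa only [l1norm_restr] using summable_sum_of_pairwise_disjoint hS fun j => |h j|)
      hblock
    rw [tsum_mul_left] at hsum
    rw [one_div, ← div_eq_inv_mul, le_div_iff₀ hsK, mul_comm]
    exact hsum
  · simp only [l1norm_restr]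
    refine (hasSum_sum_of_pairwise_disjoint hS (fun j => ?_) _).tsum_eq
    rw [Finset.mem_compl, hpart]
    exact ⟨fun ⟨i, hi, hj⟩ => ⟨i - 1, by rwa [Nat.sub_add_cancel hi]⟩,
      fun ⟨i, hj⟩ => ⟨i + 1, by omega, hj⟩⟩
end

section
/- Let B : ℝ^N → ℝ^M be a linear map, K ≤ N, 0 < λ < 1/2, and a, b ≥ 0. Let G be a set of unit-norm K-sparse vectors such that for every unit-norm K-sparse f ∈ ℝ^N there exists f' ∈ G with supp(f') ⊆ supp(f) and ‖f − f'‖₂ ≤ λ. If a ≤ (1/M)·‖B(f')‖₁ ≤ b for every f' ∈ G, then for every unit-norm K-sparse f ∈ ℝ^N, a − λ·b/(1−λ) ≤ (1/M)·‖B(f)‖₁ ≤ b/(1−λ). -/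
/-!
Let `A` be the supremum of `‖B f‖₁ / M` over unit-norm `K`-sparse `f`; it is finite since `B` is
bounded. Because the support of the net point `f'` lies in that of `f`, the error `f - f'` is again
`K`-sparse, and by homogeneity `‖B (f - f')‖₁ / M ≤ λ A`. The triangle inequality then gives
`A ≤ b + λ A`, i.e. `A ≤ b / (1 - λ)`, and `‖B f‖₁ / M ≥ a - λ A` for the lower bound.
-/

open Finset

/-- `x` has at most `k` nonzero entries. -/
def Sparse {n : ℕ} (k : ℕ) (x : Fin n → ℝ) : Prop :=
  ∃ s : Finset (Fin n), s.card ≤ k ∧ ∀ i ∉ s, x i = 0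

open scoped NNReal

namespace Seminorm

variable {E : Type*} [AddCommGroup E] [Module ℝ E] (p q : Seminorm ℝ E) (C : Set E)

noncomputable def supOnUnitSphere : ℝ := sSup (p '' {x ∈ C | q x = 1})

variable {p q C}

lemma supOnUnitSphere_nonneg : 0 ≤ supOnUnitSphere p q C :=
  Real.sSup_nonneg <| by rintro _ ⟨x, -, rfl⟩; exact apply_nonneg p x

lemma le_supOnUnitSphere_mul (hC : ∀ c : ℝ, ∀ x ∈ C, c • x ∈ C) {D : ℝ}
    (hD : ∀ x ∈ C, p x ≤ D * q x) {x : E} (hx : x ∈ C) :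
    p x ≤ supOnUnitSphere p q C * q x := by
  have hbdd : BddAbove (p '' {x ∈ C | q x = 1}) := by
    refine ⟨D, ?_⟩
    rintro _ ⟨y, ⟨hy, hy1⟩, rfl⟩
    simpa [hy1] using hD y hy
  rcases (apply_nonneg q x).eq_or_lt with hqx | hqx
  · simpa [← hqx] using hD x hx
  · have hunit : q ((q x)⁻¹ • x) = 1 := by
      rw [map_smul_eq_mul, Real.norm_eq_abs, abs_inv, abs_of_pos hqx, inv_mul_cancel₀ hqx.ne']
    have := le_csSup hbdd ⟨_, ⟨hC _ x hx, hunit⟩, rfl⟩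
    rw [map_smul_eq_mul, Real.norm_eq_abs, abs_inv, abs_of_pos hqx, inv_mul_le_iff₀ hqx] at this
    rwa [mul_comm] at this

variable {lam a b : ℝ} {G : Set E}

lemma supOnUnitSphere_le (hC : ∀ c : ℝ, ∀ x ∈ C, c • x ∈ C) {D : ℝ}
    (hD : ∀ x ∈ C, p x ≤ D * q x) (hne : ∃ x ∈ C, q x = 1) (hlam : lam < 1)
    (hcover : ∀ f ∈ C, q f = 1 → ∃ f' ∈ G, f - f' ∈ C ∧ q (f - f') ≤ lam)
    (hb : ∀ f' ∈ G, p f' ≤ b) :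
    supOnUnitSphere p q C ≤ b / (1 - lam) := by
  suffices supOnUnitSphere p q C ≤ b + lam * supOnUnitSphere p q C by
    rw [le_div_iff₀ (by linarith)]; linarith
  obtain ⟨x, hx, hx1⟩ := hne
  refine csSup_le ⟨_, x, ⟨hx, hx1⟩, rfl⟩ ?_
  rintro _ ⟨f, ⟨hf, hf1⟩, rfl⟩
  obtain ⟨f', hf'G, hdiff, hdist⟩ := hcover f hf hf1
  calc p f ≤ p f' + p (f - f') := by simpa using map_add_le_add p f' (f - f')
    _ ≤ b + supOnUnitSphere p q C * q (f - f') :=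
      add_le_add (hb f' hf'G) (le_supOnUnitSphere_mul hC hD hdiff)
    _ ≤ b + supOnUnitSphere p q C * lam := by gcongr; exact supOnUnitSphere_nonneg
    _ = b + lam * supOnUnitSphere p q C := by ring

theorem bounds_of_cover (hC : ∀ c : ℝ, ∀ x ∈ C, c • x ∈ C) {D : ℝ}
    (hD : ∀ x ∈ C, p x ≤ D * q x) (hlam0 : 0 ≤ lam) (hlam : lam < 1)
    (hcover : ∀ f ∈ C, q f = 1 → ∃ f' ∈ G, f - f' ∈ C ∧ q (f - f') ≤ lam)
    (hnet : ∀ f' ∈ G, a ≤ p f' ∧ p f' ≤ b) {f : E} (hf : f ∈ C) (hf1 : q f = 1) :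
    a - lam * b / (1 - lam) ≤ p f ∧ p f ≤ b / (1 - lam) := by
  have hsup := supOnUnitSphere_le hC hD ⟨f, hf, hf1⟩ hlam hcover fun f' hf' => (hnet f' hf').2
  obtain ⟨f', hf'G, hdiff, hdist⟩ := hcover f hf hf1
  have hpf : p f ≤ supOnUnitSphere p q C := by
    simpa [hf1] using le_supOnUnitSphere_mul hC hD hf
  have hpf' : p f' ≤ p f + p (f - f') := by simpa using map_sub_le_add p f (f - f')
  have hpdiff : p (f - f') ≤ lam * supOnUnitSphere p q C := calc
    p (f - f') ≤ supOnUnitSphere p q C * q (f - f') := le_supOnUnitSphere_mul hC hD hdiff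
    _ ≤ supOnUnitSphere p q C * lam := by gcongr; exact supOnUnitSphere_nonneg
    _ = lam * supOnUnitSphere p q C := mul_comm _ _
  constructor
  · calc a - lam * b / (1 - lam) = a - lam * (b / (1 - lam)) := by ring
      _ ≤ a - lam * supOnUnitSphere p q C := by gcongr
      _ ≤ p f := by linarith [(hnet f' hf'G).1]
  · exact hpf.trans hsup

end Seminorm

section Coordinates

variable {n : ℕ}

lemma l1norm_eq_norm (x : Fin n → ℝ) : l1norm x = ‖WithLp.toLp 1 x‖ := by
  simp [l1norm, PiLp.norm_eq_of_L1]

lemma l2norm_eq_norm (x : Fin n → ℝ) : l2norm x = ‖WithLp.toLp 2 x‖ := by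
  simp [l2norm, EuclideanSpace.norm_eq]

variable (n) in
noncomputable def l1Seminorm : Seminorm ℝ (Fin n → ℝ) :=
  (normSeminorm ℝ (PiLp 1 fun _ : Fin n => ℝ)).comp
    (WithLp.linearEquiv 1 ℝ (Fin n → ℝ)).symm.toLinearMap

variable (n) in
noncomputable def l2Seminorm : Seminorm ℝ (Fin n → ℝ) :=
  (normSeminorm ℝ (EuclideanSpace ℝ (Fin n))).comp
    (WithLp.linearEquiv 2 ℝ (Fin n → ℝ)).symm.toLinearMap

@[simp] lemma l1Seminorm_apply (x : Fin n → ℝ) : l1Seminorm n x = l1norm x := by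
  simp [l1Seminorm, l1norm_eq_norm]

@[simp] lemma l2Seminorm_apply (x : Fin n → ℝ) : l2Seminorm n x = l2norm x := by
  simp [l2Seminorm, l2norm_eq_norm]

lemma exists_l1norm_map_le_mul_l2norm {m : ℕ} (B : (Fin n → ℝ) →ₗ[ℝ] (Fin m → ℝ)) :
    ∃ D, ∀ x, l1norm (B x) ≤ D * l2norm x := by
  let T : EuclideanSpace ℝ (Fin n) →L[ℝ] PiLp 1 (fun _ : Fin m => ℝ) :=
    LinearMap.toContinuousLinearMap <| (WithLp.linearEquiv 1 ℝ (Fin m → ℝ)).symm.toLinearMap ∘ₗ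
      B ∘ₗ (WithLp.linearEquiv 2 ℝ (Fin n → ℝ)).toLinearMap
  refine ⟨‖T‖, fun x => ?_⟩
  simpa [l1norm_eq_norm, l2norm_eq_norm, T] using T.le_opNorm (WithLp.toLp 2 x)

lemma Sparse.smul {k : ℕ} {x : Fin n → ℝ} (hx : Sparse k x) (c : ℝ) : Sparse k (c • x) := by
  obtain ⟨s, hs, hzero⟩ := hx
  exact ⟨s, hs, fun i hi => by simp [hzero i hi]⟩

lemma Sparse.sub_of_support_subset {k : ℕ} {x y : Fin n → ℝ} (hx : Sparse k x)
    (hyx : Function.support y ⊆ Function.support x) : Sparse k (x - y) := by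
  obtain ⟨s, hs, hzero⟩ := hx
  refine ⟨s, hs, fun i hi => ?_⟩
  have hyi : y i = 0 := Function.notMem_support.mp fun h => hyx h (hzero i hi)
  simp [hzero i hi, hyi]

end Coordinates

theorem net_extension_general
    {N M : ℕ} (B : (Fin N → ℝ) →ₗ[ℝ] (Fin M → ℝ))
    (K : ℕ) (lam : ℝ) (hlam0 : 0 < lam) (hlam : lam < 1 / 2)
    (a b : ℝ)
    (G : Set (Fin N → ℝ))
    (hcover : ∀ f : Fin N → ℝ, l2norm f = 1 → Sparse K f →
      ∃ f' ∈ G, Function.support f' ⊆ Function.support f ∧ l2norm (f - f') ≤ lam)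
    (hnet : ∀ f' ∈ G, a ≤ (1 / (M : ℝ)) * l1norm (B f')
      ∧ (1 / (M : ℝ)) * l1norm (B f') ≤ b) :
    ∀ f : Fin N → ℝ, l2norm f = 1 → Sparse K f →
      a - lam * b / (1 - lam) ≤ (1 / (M : ℝ)) * l1norm (B f)
      ∧ (1 / (M : ℝ)) * l1norm (B f) ≤ b / (1 - lam) := by
  intro f hf hfK
  let p : Seminorm ℝ (Fin N → ℝ) := (M : ℝ≥0)⁻¹ • (l1Seminorm M).comp B
  have hp (x : Fin N → ℝ) : p x = 1 / (M : ℝ) * l1norm (B x) := by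
    simp [p, NNReal.smul_def]
  obtain ⟨D, hD⟩ := exists_l1norm_map_le_mul_l2norm B
  simp only [← hp] at hnet ⊢
  refine Seminorm.bounds_of_cover (C := {x | Sparse K x}) (q := l2Seminorm N) (D := 1 / M * D)
    (fun c x hx => hx.smul c) (fun x _ => ?_) hlam0.le (by linarith) (fun f hfK hf1 => ?_) hnet hfK
    (by simpa using hf)
  · rw [hp, l2Seminorm_apply, mul_assoc]
    gcongr
    exact hD x
  · obtain ⟨f', hf'G, hsupp, hdist⟩ := hcover f (by simpa using hf1) hfK
    exact ⟨f', hf'G, hfK.sub_of_support_subset hsupp, by simpa using hdist⟩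

/-- **Net-extension step.** If a `λ`-covering `G` (with matching supports) of
the unit-norm `K`-sparse vectors satisfies `a ≤ (1/M)‖B f'‖₁ ≤ b` for all
`f' ∈ G`, then every unit-norm `K`-sparse `f` satisfies
`a − λ b/(1−λ) ≤ (1/M)‖B f‖₁ ≤ b/(1−λ)`. -/
theorem net_extension
    {N M : ℕ} (hM : 0 < M) (B : (Fin N → ℝ) →ₗ[ℝ] (Fin M → ℝ))
    (K : ℕ) (hK : K ≤ N) (lam : ℝ) (hlam0 : 0 < lam) (hlam : lam < 1 / 2)
    (a b : ℝ) (ha : 0 ≤ a) (hb : 0 ≤ b)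
    (G : Set (Fin N → ℝ))
    (hG : ∀ f' ∈ G, l2norm f' = 1 ∧ Sparse K f')
    (hcover : ∀ f : Fin N → ℝ, l2norm f = 1 → Sparse K f →
      ∃ f' ∈ G, Function.support f' ⊆ Function.support f ∧ l2norm (f - f') ≤ lam)
    (hnet : ∀ f' ∈ G, a ≤ (1 / (M : ℝ)) * l1norm (B f')
      ∧ (1 / (M : ℝ)) * l1norm (B f') ≤ b) :
    ∀ f : Fin N → ℝ, l2norm f = 1 → Sparse K f →
      a - lam * b / (1 - lam) ≤ (1 / (M : ℝ)) * l1norm (B f)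
      ∧ (1 / (M : ℝ)) * l1norm (B f) ≤ b / (1 - lam) :=
  net_extension_general B K lam hlam0 hlam a b G hcover hnet
end
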